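/- arXiv:2601.18474 — 7 statements merged into one kernel-verified Lean document; each statement's English description precedes it below -/
import Mathlib

section
/- For every natural number j, there exists a nonzero rational number a such that the (2j)-th iterated derivative at 0 of the function t ↦ Γ(1 + t) · Γ(1 − t) equals a · π^(2j); moreover, every odd-order iterated derivative of this function at 0 vanishes. -/
open Real

/-!
On `(-1, 1)` the reflection formula gives `Γ(1 + t) Γ(1 - t) sin(π t) = π t`. Both factors on the
left are smooth at `0`, so by the Leibniz rule their Taylor series at `0` multiply, and the Taylor
series `T` of `Γ(1 + t) Γ(1 - t)` satisfies `T · sin(π x) = π x` in the integral domain `ℝ⟦X⟧`.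
This determines `T` as the rescaling by `π` of the rational series of `x / sin x`. That series comes
from the Bernoulli generating function `B(x) = x / (eˣ - 1)`: `2 B(x) - B(2x) = x / sinh x`, and
`x ↦ i x` turns it into `x / sin x`, whose coefficient of `x ^ (2j)` is
`± (2 - 2 ^ (2j)) B_{2j} / (2j)!`. It vanishes in odd degrees and is nonzero in even degrees because
`ζ(2j) ≠ 0` forces `B_{2j} ≠ 0`.
-/

open PowerSeries Nat Filter Topology
open scoped ContDiff

noncomputable def taylorSeries {𝕜 : Type*} [NontriviallyNormedField 𝕜] (f : 𝕜 → 𝕜) (x : 𝕜) :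
    𝕜⟦X⟧ :=
  mk fun n => (n ! : 𝕜)⁻¹ * iteratedDeriv n f x

section taylorSeries

variable {𝕜 : Type*} [NontriviallyNormedField 𝕜] {f g : 𝕜 → 𝕜} {x : 𝕜}

theorem coeff_taylorSeries (n : ℕ) :
    coeff n (taylorSeries f x) = (n ! : 𝕜)⁻¹ * iteratedDeriv n f x :=
  coeff_mk _ _

theorem Filter.EventuallyEq.taylorSeries_eq (h : f =ᶠ[𝓝 x] g) :
    taylorSeries f x = taylorSeries g x := by
  ext n
  rw [coeff_taylorSeries, coeff_taylorSeries, h.iteratedDeriv_eq]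

theorem taylorSeries_mul [CharZero 𝕜] (hf : ContDiffAt 𝕜 ∞ f x) (hg : ContDiffAt 𝕜 ∞ g x) :
    taylorSeries (f * g) x = taylorSeries f x * taylorSeries g x := by
  ext n
  rw [coeff_taylorSeries, iteratedDeriv_mul (hf.of_le (by exact_mod_cast le_top))
    (hg.of_le (by exact_mod_cast le_top)), coeff_mul,
    Finset.Nat.sum_antidiagonal_eq_sum_range_succ_mk, Finset.mul_sum]
  refine Finset.sum_congr rfl fun i hi => ?_
  rw [coeff_taylorSeries, coeff_taylorSeries, Nat.cast_choose _ (by grind)]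
  field_simp [Nat.factorial_ne_zero]

theorem taylorSeries_comp_const_mul (hf : ContDiff 𝕜 ∞ f) (c : 𝕜) :
    taylorSeries (fun t => f (c * t)) 0 = rescale c (taylorSeries f 0) := by
  ext n
  rw [coeff_rescale, coeff_taylorSeries, coeff_taylorSeries,
    iteratedDeriv_comp_const_mul (hf.of_le (by exact_mod_cast le_top)) c]
  simp only [mul_zero]
  ring

theorem taylorSeries_id_zero : taylorSeries id (0 : 𝕜) = X := by
  ext n
  rw [coeff_taylorSeries, iteratedDeriv_id, coeff_X]
  rcases n with _ | _ | n <;> simp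

end taylorSeries

theorem Real.taylorSeries_sin : taylorSeries Real.sin 0 = PowerSeries.sin ℝ := by
  ext n
  obtain ⟨k, rfl | rfl⟩ := n.even_or_odd'
  · simp [coeff_taylorSeries, PowerSeries.sin]
  · have hk : (2 * k + 1) / 2 = k := by omega
    simp [coeff_taylorSeries, PowerSeries.sin, hk, div_eq_inv_mul]

section PowerSeries

variable {A : Type*} [CommRing A] [Algebra ℚ A]

theorem PowerSeries.exp_sub_one_ne_zero [Nontrivial A] : exp A - 1 ≠ 0 := by
  intro h
  simpa using congrArg (coeff 1) h

theorem PowerSeries.rescale_sin_ne_zero {c : A} (hc : c ≠ 0) :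
    rescale c (PowerSeries.sin A) ≠ 0 := by
  intro h
  simpa [coeff_rescale, PowerSeries.sin, hc] using congrArg (coeff 1) h

theorem PowerSeries.rescale_exp_sub_rescale_neg_exp {i : A} (hi : i ^ 2 = -1) :
    rescale i (exp A) - rescale (-i) (exp A) = C (2 * i) * PowerSeries.sin A := by
  ext n
  rw [map_sub, coeff_rescale, coeff_rescale, coeff_C_mul, PowerSeries.sin, coeff_mk, coeff_exp]
  obtain ⟨k, rfl | rfl⟩ := n.even_or_odd'
  · simp [pow_mul, hi]
  · have hk : (2 * k + 1) / 2 = k := by omega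
    have hpow : i ^ (2 * k + 1) = (-1) ^ k * i := by rw [pow_succ, pow_mul, hi]
    simp [(odd_two_mul_add_one k).neg_pow, hpow, hk, div_eq_mul_inv]
    ring

theorem rescale_two_bernoulliPowerSeries_mul_exp_sq_sub_one :
    rescale 2 (bernoulliPowerSeries A) * (exp A ^ 2 - 1) = 2 * X := by
  have h := congrArg (rescale (2 : A)) (bernoulliPowerSeries_mul_exp_sub_one A)
  rw [map_mul, map_sub, map_one, rescale_X, map_ofNat] at h
  rw [exp_pow_eq_rescale_exp, ← h]
  norm_num

theorem rescale_two_bernoulliPowerSeries_mul_exp_add_one [IsDomain A] :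
    rescale 2 (bernoulliPowerSeries A) * (exp A + 1) = 2 * bernoulliPowerSeries A := by
  apply mul_right_cancel₀ (exp_sub_one_ne_zero (A := A))
  linear_combination rescale_two_bernoulliPowerSeries_mul_exp_sq_sub_one (A := A) -
    2 * bernoulliPowerSeries_mul_exp_sub_one A

end PowerSeries

theorem bernoulli_two_mul_ne_zero {j : ℕ} (hj : j ≠ 0) : bernoulli (2 * j) ≠ 0 := by
  intro h
  have hζ := riemannZeta_ne_zero_of_one_lt_re (s := 2 * j) (by simp; norm_cast; omega)
  rw [riemannZeta_two_mul_nat hj, h] at hζ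
  simp at hζ

/-- The series of `x / sinh x = 2x eˣ / (e^{2x} - 1) = B(2x) eˣ = 2 B(x) - B(2x)`. -/
noncomputable def xDivSinh : ℚ⟦X⟧ :=
  2 * bernoulliPowerSeries ℚ - rescale 2 (bernoulliPowerSeries ℚ)

theorem coeff_xDivSinh (n : ℕ) :
    coeff n xDivSinh = (2 - 2 ^ n) * bernoulli n / n ! := by
  rw [xDivSinh, map_sub, coeff_rescale, ← map_ofNat C, coeff_C_mul, bernoulliPowerSeries,
    coeff_mk]
  simp only [Algebra.algebraMap_self, RingHom.id_apply]
  ring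

theorem coeff_xDivSinh_of_odd {n : ℕ} (hn : Odd n) : coeff n xDivSinh = 0 := by
  rcases eq_or_ne n 1 with rfl | h1
  · simp [coeff_xDivSinh]
  · rw [coeff_xDivSinh, bernoulli_eq_zero_of_odd hn (by grind [Odd.pos])]
    simp

theorem coeff_xDivSinh_two_mul_ne_zero (j : ℕ) : coeff (2 * j) xDivSinh ≠ 0 := by
  rcases eq_or_ne j 0 with rfl | hj
  · norm_num [coeff_xDivSinh]
  · rw [coeff_xDivSinh]
    refine div_ne_zero (mul_ne_zero ?_ (bernoulli_two_mul_ne_zero hj)) (by positivity)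
    have : (2 : ℚ) ^ 2 ≤ 2 ^ (2 * j) := pow_le_pow_right₀ (by norm_num) (by omega)
    linarith

theorem xDivSinh_mul_exp_sub_exp_neg :
    xDivSinh * (exp ℚ - evalNegHom (exp ℚ)) = 2 * X := by
  have h : xDivSinh = rescale 2 (bernoulliPowerSeries ℚ) * exp ℚ := by
    rw [xDivSinh, ← rescale_two_bernoulliPowerSeries_mul_exp_add_one (A := ℚ)]
    ring
  rw [h]
  linear_combination rescale_two_bernoulliPowerSeries_mul_exp_sq_sub_one (A := ℚ) -
    rescale 2 (bernoulliPowerSeries ℚ) * exp_mul_exp_neg_eq_one (A := ℚ)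

/-- The series of `x / sin x`, i.e. `xDivSinh` at `i x`. As the odd coefficients of `xDivSinh`
vanish, `iⁿ` only has to be replaced by `(-1) ^ (n / 2)` for even `n`. -/
noncomputable def xDivSin : ℚ⟦X⟧ := mk fun n => (-1) ^ (n / 2) * coeff n xDivSinh

theorem coeff_xDivSin_of_odd {n : ℕ} (hn : Odd n) : coeff n xDivSin = 0 := by
  rw [xDivSin, coeff_mk, coeff_xDivSinh_of_odd hn, mul_zero]

theorem coeff_xDivSin_two_mul_ne_zero (j : ℕ) : coeff (2 * j) xDivSin ≠ 0 := by
  rw [xDivSin, coeff_mk]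
  exact mul_ne_zero (pow_ne_zero _ (by norm_num)) (coeff_xDivSinh_two_mul_ne_zero j)

theorem map_xDivSin :
    map (algebraMap ℚ ℂ) xDivSin = rescale Complex.I (map (algebraMap ℚ ℂ) xDivSinh) := by
  ext n
  rw [coeff_map, coeff_rescale, coeff_map, xDivSin, coeff_mk]
  obtain ⟨k, rfl | rfl⟩ := n.even_or_odd'
  · simp [pow_mul]
  · simp [coeff_xDivSinh_of_odd (odd_two_mul_add_one k)]

theorem xDivSin_mul_sin : xDivSin * PowerSeries.sin ℚ = X := by
  apply map_injective (algebraMap ℚ ℂ) (RingHom.injective _)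
  have h := congrArg (fun p => rescale Complex.I (map (algebraMap ℚ ℂ) p))
    xDivSinh_mul_exp_sub_exp_neg
  simp only [map_mul, map_sub, map_exp, evalNegHom, ← rescale_map, map_neg, map_one,
    rescale_rescale, neg_one_mul, map_ofNat, map_X, rescale_X] at h
  rw [rescale_exp_sub_rescale_neg_exp Complex.I_sq] at h
  rw [map_mul, map_xDivSin, map_sin, map_X]
  have h2I : (2 : ℂ⟦X⟧) * (C Complex.I * X) = C (2 * Complex.I) * X := by
    rw [map_mul, map_ofNat, mul_assoc]
  apply mul_left_cancel₀ (show C (2 * Complex.I) ≠ 0 by simp)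
  linear_combination h + h2I

theorem Complex.analyticAt_Gamma {s : ℂ} (hs : ∀ m : ℕ, s ≠ -m) : AnalyticAt ℂ Gamma s := by
  simpa only [Pi.inv_def, inv_inv] using
    (differentiable_one_div_Gamma.analyticAt s).inv (inv_ne_zero (Gamma_ne_zero hs))

theorem Real.analyticAt_Gamma {s : ℝ} (hs : ∀ m : ℕ, s ≠ -m) : AnalyticAt ℝ Gamma s := by
  have h := (Complex.analyticAt_Gamma (s := s) (by exact_mod_cast hs)).re_ofReal
  simpa only [Complex.Gamma_ofReal, Complex.ofReal_re] using h

theorem Real.Gamma_one_add_mul_Gamma_one_sub_mul_sin {t : ℝ} (ht : |t| < 1) :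
    Gamma (1 + t) * Gamma (1 - t) * Real.sin (π * t) = π * t := by
  rcases eq_or_ne t 0 with rfl | ht0
  · simp
  have hsin : Real.sin (π * t) ≠ 0 := by
    rw [Ne, sin_eq_zero_iff_of_lt_of_lt (by nlinarith [abs_lt.mp ht, pi_pos])
      (by nlinarith [abs_lt.mp ht, pi_pos])]
    exact mul_ne_zero pi_ne_zero ht0
  rw [add_comm, Gamma_add_one ht0, mul_assoc t, Gamma_mul_Gamma_one_sub, mul_assoc,
    div_mul_cancel₀ _ hsin, mul_comm]

theorem contDiffAt_Gamma_one_add_mul_Gamma_one_sub :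
    ContDiffAt ℝ ∞ (fun t : ℝ => Gamma (1 + t) * Gamma (1 - t)) 0 := by
  have hΓ : AnalyticAt ℝ Gamma 1 :=
    analyticAt_Gamma fun m => by linarith [(m.cast_nonneg : (0 : ℝ) ≤ m)]
  exact ((hΓ.comp_of_eq (by fun_prop) (by simp)).mul
    (hΓ.comp_of_eq (by fun_prop) (by simp))).contDiffAt

theorem taylorSeries_Gamma_one_add_mul_Gamma_one_sub :
    taylorSeries (fun t : ℝ => Gamma (1 + t) * Gamma (1 - t)) 0 =
      rescale π (map (algebraMap ℚ ℝ) xDivSin) := by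
  have hsin : taylorSeries (fun t => Real.sin (π * t)) 0 = rescale π (PowerSeries.sin ℝ) := by
    rw [taylorSeries_comp_const_mul contDiff_sin, Real.taylorSeries_sin]
  have hid : taylorSeries (fun t => π * t) 0 = rescale π X := by
    rw [← taylorSeries_id_zero, ← taylorSeries_comp_const_mul contDiff_id]
    rfl
  have hprod : taylorSeries (fun t : ℝ => Gamma (1 + t) * Gamma (1 - t)) 0 *
      rescale π (PowerSeries.sin ℝ) = rescale π X := by
    rw [← hsin, ← taylorSeries_mul contDiffAt_Gamma_one_add_mul_Gamma_one_sub
      (by fun_prop), ← hid]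
    refine Filter.EventuallyEq.taylorSeries_eq ?_
    filter_upwards [eventually_abs_sub_lt (0 : ℝ) one_pos] with t ht
    simpa using Gamma_one_add_mul_Gamma_one_sub_mul_sin (by simpa using ht)
  have hxDivSin : rescale π (map (algebraMap ℚ ℝ) xDivSin) * rescale π (PowerSeries.sin ℝ) =
      rescale π X := by
    rw [← map_sin (algebraMap ℚ ℝ), ← map_mul, ← map_mul, xDivSin_mul_sin, map_X]
  exact mul_right_cancel₀ (rescale_sin_ne_zero pi_ne_zero) (hprod.trans hxDivSin.symm)

theorem iteratedDeriv_Gamma_one_add_mul_Gamma_one_sub_eq_coeff_xDivSin (n : ℕ) :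
    iteratedDeriv n (fun t : ℝ => Gamma (1 + t) * Gamma (1 - t)) 0 =
      n ! * ((coeff n xDivSin : ℚ) : ℝ) * π ^ n := by
  have h := congrArg (coeff n) taylorSeries_Gamma_one_add_mul_Gamma_one_sub
  rw [coeff_taylorSeries, coeff_rescale, coeff_map, inv_mul_eq_iff_eq_mul₀ (by positivity)] at h
  rw [h, eq_ratCast]
  ring

/-- The Taylor coefficients of `Γ(1+t)Γ(1−t) = πt / sin(πt)` at `t = 0`:
the `(2j)`-th derivative at `0` is a nonzero rational multiple of `π^(2j)`,
and every odd-order derivative at `0` vanishes. -/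
theorem iteratedDeriv_Gamma_one_add_mul_Gamma_one_sub (j : ℕ) :
    (∃ a : ℚ, a ≠ 0 ∧
      iteratedDeriv (2 * j) (fun t : ℝ => Real.Gamma (1 + t) * Real.Gamma (1 - t)) 0 =
        (a : ℝ) * π ^ (2 * j)) ∧
    (∀ n : ℕ, Odd n →
      iteratedDeriv n (fun t : ℝ => Real.Gamma (1 + t) * Real.Gamma (1 - t)) 0 = 0) := by
  refine ⟨⟨(2 * j)! * coeff (2 * j) xDivSin, ?_, ?_⟩, fun n hn => ?_⟩
  · exact mul_ne_zero (by positivity) (coeff_xDivSin_two_mul_ne_zero j)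
  · rw [iteratedDeriv_Gamma_one_add_mul_Gamma_one_sub_eq_coeff_xDivSin, Rat.cast_mul,
      Rat.cast_natCast]
  · rw [iteratedDeriv_Gamma_one_add_mul_Gamma_one_sub_eq_coeff_xDivSin, coeff_xDivSin_of_odd hn]
    simp
end

section
/- For every natural number j, there exists a nonzero rational number a such that the (2j)-th iterated derivative at 0 of the function t ↦ Γ(1/2 + t) · Γ(1/2 − t) equals a · π^(2j+1); moreover, every odd-order iterated derivative of this function at 0 vanishes. -/
/-!
By the reflection formula, `Γ(1/2 + t) Γ(1/2 - t) = π / cos (π t)`. The `n`-th derivative of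
`sec x` is `Pₙ(tan x) sec x` for a polynomial `Pₙ` with natural coefficients, so the `n`-th
derivative at `0` is `Pₙ(0) πⁿ⁺¹`. The recursion gives `P_{n+2}(0) ≥ P_n(0)`, so `P_{2j}(0) ≥ 1`;
the odd derivatives vanish because the function is even.
-/

open Real Polynomial Filter Topology

theorem Function.Even.iteratedDeriv_zero_of_odd {𝕜 F : Type*} [NontriviallyNormedField 𝕜]
    [NormedAddCommGroup F] [NormedSpace 𝕜 F] [IsAddTorsionFree F] {f : 𝕜 → F}
    (hf : Function.Even f) {n : ℕ} (hn : Odd n) : iteratedDeriv n f 0 = 0 := by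
  have h := iteratedDeriv_comp_neg n f 0
  rw [show (fun x => f (-x)) = f from funext hf, neg_zero, hn.neg_one_pow, neg_one_smul] at h
  exact self_eq_neg.mp h

/-- `(d/dx)ⁿ sec x = Pₙ(tan x) sec x`. -/
noncomputable def secDerivPoly : ℕ → ℕ[X]
  | 0 => 1
  | n + 1 => X * secDerivPoly n + (1 + X ^ 2) * derivative (secDerivPoly n)

lemma secDerivPoly_succ_coeff_zero (n : ℕ) :
    (secDerivPoly (n + 1)).coeff 0 = (secDerivPoly n).coeff 1 := by
  simp [secDerivPoly, coeff_derivative, mul_coeff_zero]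

lemma secDerivPoly_succ_coeff_one (n : ℕ) :
    (secDerivPoly (n + 1)).coeff 1 = (secDerivPoly n).coeff 0 + 2 * (secDerivPoly n).coeff 2 := by
  simp only [secDerivPoly, add_mul, one_mul, coeff_add, coeff_X_mul, coeff_derivative,
    coeff_X_pow_mul', Nat.not_ofNat_le_one, ↓reduceIte, add_zero]
  ring

lemma secDerivPoly_two_mul_coeff_zero_pos (j : ℕ) : 0 < (secDerivPoly (2 * j)).coeff 0 := by
  induction j with
  | zero => simp [secDerivPoly]
  | succ j ih =>
    rw [mul_add_one, secDerivPoly_succ_coeff_zero, secDerivPoly_succ_coeff_one]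
    omega

lemma secDerivPoly_map_succ {R : Type*} [CommSemiring R] (f : ℕ →+* R) (n : ℕ) :
    (secDerivPoly (n + 1)).map f =
      X * (secDerivPoly n).map f + (1 + X ^ 2) * derivative ((secDerivPoly n).map f) := by
  simp [secDerivPoly, derivative_map]

lemma hasDerivAt_eval_tan_div_cos (p : ℝ[X]) {x : ℝ} (hx : cos x ≠ 0) :
    HasDerivAt (fun x => p.eval (tan x) / cos x)
      ((X * p + (1 + X ^ 2) * derivative p).eval (tan x) / cos x) x := by
  refine (((p.hasDerivAt (tan x)).comp x (hasDerivAt_tan hx)).fun_div (hasDerivAt_cos x) hx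
    |>.congr_deriv ?_)
  simp only [eval_add, eval_mul, eval_X, eval_one, eval_pow, Function.comp_apply, tan_eq_sin_div_cos]
  field_simp
  linear_combination -(eval (sin x / cos x) (derivative p)) * (sin_sq_add_cos_sq x)

lemma iteratedDeriv_inv_cos_const_mul (c : ℝ) (n : ℕ) {t : ℝ} (ht : cos (c * t) ≠ 0) :
    iteratedDeriv n (fun t => (cos (c * t))⁻¹) t =
      c ^ n * (((secDerivPoly n).map (Nat.castRingHom ℝ)).eval (tan (c * t)) / cos (c * t)) := by
  induction n generalizing t with
  | zero => simp [secDerivPoly]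
  | succ n ih =>
    have hopen : IsOpen {t : ℝ | cos (c * t) ≠ 0} := isOpen_ne_fun (by fun_prop) continuous_const
    have hderiv := ((hasDerivAt_eval_tan_div_cos ((secDerivPoly n).map (Nat.castRingHom ℝ))
      ht).comp t ((hasDerivAt_id t).const_mul c)).const_mul (c ^ n)
    simp only [Function.comp_def] at hderiv
    have heq : iteratedDeriv n (fun t => (cos (c * t))⁻¹) =ᶠ[𝓝 t] fun s =>
        c ^ n * (((secDerivPoly n).map (Nat.castRingHom ℝ)).eval (tan (c * s)) / cos (c * s)) :=
      eventually_of_mem (hopen.mem_nhds ht) fun s hs => ih hs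
    rw [iteratedDeriv_succ, heq.deriv_eq, hderiv.deriv, secDerivPoly_map_succ]
    ring

lemma Gamma_half_add_mul_Gamma_half_sub (t : ℝ) :
    Gamma (1 / 2 + t) * Gamma (1 / 2 - t) = π * (cos (π * t))⁻¹ := by
  rw [show 1 / 2 - t = 1 - (1 / 2 + t) by ring, Gamma_mul_Gamma_one_sub,
    show π * (1 / 2 + t) = π * t + π / 2 by ring, sin_add_pi_div_two, div_eq_mul_inv]

lemma iteratedDeriv_Gamma_half_add_mul_Gamma_half_sub_zero (n : ℕ) :
    iteratedDeriv n (fun t : ℝ => Gamma (1 / 2 + t) * Gamma (1 / 2 - t)) 0 =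
      (secDerivPoly n).coeff 0 * π ^ (n + 1) := by
  simp_rw [Gamma_half_add_mul_Gamma_half_sub]
  rw [iteratedDeriv_const_mul_field, iteratedDeriv_inv_cos_const_mul π n (by simp)]
  simp only [mul_zero, tan_zero, eval_zero_map, eq_natCast, cos_zero, div_one,
    coeff_zero_eq_eval_zero]
  ring

/-- The Taylor coefficients of `Γ(1/2+t)Γ(1/2−t) = π / cos(πt)` at `t = 0`:
the `(2j)`-th derivative at `0` is a nonzero rational multiple of `π^(2j+1)`,
and every odd-order derivative at `0` vanishes. -/
theorem iteratedDeriv_Gamma_half_add_mul_Gamma_half_sub (j : ℕ) :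
    (∃ a : ℚ, a ≠ 0 ∧
      iteratedDeriv (2 * j) (fun t : ℝ => Real.Gamma (1 / 2 + t) * Real.Gamma (1 / 2 - t)) 0 =
        (a : ℝ) * π ^ (2 * j + 1)) ∧
    (∀ n : ℕ, Odd n →
      iteratedDeriv n (fun t : ℝ => Real.Gamma (1 / 2 + t) * Real.Gamma (1 / 2 - t)) 0 = 0) := by
  refine ⟨⟨(secDerivPoly (2 * j)).coeff 0, ?_, ?_⟩, fun n hn => ?_⟩
  · exact_mod_cast (secDerivPoly_two_mul_coeff_zero_pos j).ne'
  · rw [iteratedDeriv_Gamma_half_add_mul_Gamma_half_sub_zero]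
    norm_cast
  · refine Function.Even.iteratedDeriv_zero_of_odd (fun t => ?_) hn
    simp only [sub_neg_eq_add, ← sub_eq_add_neg, mul_comm]
end

section
/- For every natural number n, the (2n)-th iterated derivative at 0 of the function t ↦ (cos t)⁻¹ is a nonzero integer, and the (2n+1)-th iterated derivative at 0 of this function is zero. -/
/-!
Differentiating `q(tan t) · sec t` gives `((1 + X²) q' + X q)(tan t) · sec t`, so the `n`-th
derivative of `sec` is `Qₙ(tan t) · sec t` for integer polynomials `Qₙ`, and its value at `0` is
the constant coefficient of `Qₙ`. The coefficients obey
`coeff (Qₙ₊₁) k = (k + 1) coeff (Qₙ) (k + 1) + k coeff (Qₙ) (k - 1)`, so they are nonnegative and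
positive whenever `k ≤ n` and `k ≡ n (mod 2)`; in particular `Q₂ₙ(0) ≠ 0`. The odd derivatives
vanish at `0` because `sec` is even.
-/

open Polynomial Real

theorem Function.Even.iteratedDeriv_eq_zero_of_odd {𝕜 F : Type*} [NontriviallyNormedField 𝕜]
    [CharZero 𝕜] [NormedAddCommGroup F] [NormedSpace 𝕜 F] {f : 𝕜 → F} (hf : f.Even)
    {n : ℕ} (hn : Odd n) : iteratedDeriv n f 0 = 0 := by
  have h := iteratedDeriv_comp_neg n f 0
  rw [funext hf, neg_zero, hn.neg_one_pow, neg_one_smul, eq_neg_iff_add_eq_zero,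
    ← two_smul 𝕜] at h
  simpa using h

noncomputable def secPoly : ℕ → ℤ[X]
  | 0 => 1
  | n + 1 => (1 + X ^ 2) * derivative (secPoly n) + X * secPoly n

theorem coeff_secPoly_succ_zero (n : ℕ) :
    (secPoly (n + 1)).coeff 0 = (secPoly n).coeff 1 := by
  simp [secPoly, add_mul, coeff_derivative]

theorem coeff_secPoly_succ_succ (n k : ℕ) :
    (secPoly (n + 1)).coeff (k + 1) =
      (k + 2) * (secPoly n).coeff (k + 2) + (k + 1) * (secPoly n).coeff k := by
  rcases k with _ | k <;> simp [secPoly, add_mul, coeff_derivative, coeff_X_pow_mul'] <;> ring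

theorem coeff_secPoly_nonneg (n k : ℕ) : 0 ≤ (secPoly n).coeff k := by
  induction n generalizing k with
  | zero => rw [secPoly, coeff_one]; positivity
  | succ n ih =>
    rcases k with _ | k
    · simpa [coeff_secPoly_succ_zero] using ih 1
    · rw [coeff_secPoly_succ_succ]
      have := ih k
      have := ih (k + 2)
      positivity

theorem coeff_secPoly_pos {n k : ℕ} (hkn : k ≤ n) (hpar : Even (n + k)) :
    0 < (secPoly n).coeff k := by
  induction n generalizing k with
  | zero =>
    obtain rfl : k = 0 := by omega
    simp [secPoly]
  | succ n ih =>
    rcases k with _ | k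
    · rw [coeff_secPoly_succ_zero]
      exact ih (by grind) (by grind)
    · rw [coeff_secPoly_succ_succ]
      have := coeff_secPoly_nonneg n k
      have := coeff_secPoly_nonneg n (k + 2)
      rcases Nat.lt_or_ge (k + 1) n with hlt | hge
      · have := ih (k := k + 2) hlt (by grind)
        positivity
      · have := ih (k := k) (by omega) (by grind)
        positivity

theorem hasDerivAt_tan_eq_one_add_tan_sq {x : ℝ} (hx : cos x ≠ 0) :
    HasDerivAt tan (1 + tan x ^ 2) x := by
  simpa [← inv_one_add_tan_sq hx] using hasDerivAt_tan hx

theorem hasDerivAt_inv_cos {x : ℝ} (hx : cos x ≠ 0) :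
    HasDerivAt (fun t => (cos t)⁻¹) (tan x * (cos x)⁻¹) x :=
  ((hasDerivAt_cos x).inv hx).congr_deriv <| by rw [tan_eq_sin_div_cos]; field_simp

theorem hasDerivAt_aeval_tan_mul_inv_cos (p : ℤ[X]) {x : ℝ} (hx : cos x ≠ 0) :
    HasDerivAt (fun t => aeval (tan t) p * (cos t)⁻¹)
      (aeval (tan x) ((1 + X ^ 2) * derivative p + X * p) * (cos x)⁻¹) x := by
  refine (((p.hasDerivAt_aeval (tan x)).comp x (hasDerivAt_tan_eq_one_add_tan_sq hx)).fun_mul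
    (hasDerivAt_inv_cos hx)).congr_deriv ?_
  simp only [map_add, map_mul, map_pow, aeval_X, map_one, Function.comp_apply]
  ring

theorem iteratedDeriv_inv_cos (n : ℕ) {x : ℝ} (hx : cos x ≠ 0) :
    iteratedDeriv n (fun t => (cos t)⁻¹) x = aeval (tan x) (secPoly n) * (cos x)⁻¹ := by
  induction n generalizing x with
  | zero => simp [secPoly]
  | succ n ih =>
    have hev : iteratedDeriv n (fun t => (cos t)⁻¹) =ᶠ[nhds x]
        fun t => aeval (tan t) (secPoly n) * (cos t)⁻¹ :=
      (continuous_cos.continuousAt.eventually_ne hx).mono fun t ht => ih ht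
    rw [iteratedDeriv_succ, hev.deriv_eq, (hasDerivAt_aeval_tan_mul_inv_cos _ hx).deriv, secPoly]

/-- The even-order derivatives of the secant `t ↦ (cos t)⁻¹` at `0` are nonzero
integers (the Euler numbers), and the odd-order derivatives at `0` vanish. -/
theorem iteratedDeriv_sec_zero (n : ℕ) :
    (∃ k : ℤ, k ≠ 0 ∧
      iteratedDeriv (2 * n) (fun t : ℝ => (Real.cos t)⁻¹) 0 = (k : ℝ)) ∧
    iteratedDeriv (2 * n + 1) (fun t : ℝ => (Real.cos t)⁻¹) 0 = 0 := by
  refine ⟨⟨(secPoly (2 * n)).coeff 0, (coeff_secPoly_pos (Nat.zero_le _) (by simp)).ne', ?_⟩, ?_⟩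
  · simp [iteratedDeriv_inv_cos, ← coeff_zero_eq_aeval_zero']
  · exact Function.Even.iteratedDeriv_eq_zero_of_odd (fun t => by simp) (odd_two_mul_add_one n)
end

section
/- Let q be a rational number with 2q ∉ ℤ. Then for every natural number j there exists a real algebraic number d such that ∑_{i=0}^{j} (−1)^(j−i) · Γ^(i)(q) · Γ^(j−i)(1−q) / (i! · (j−i)!) = d · π^(j+1). -/
/-!
By the reflection formula the sum is `(1/j!)·(d/dy)^j (π / sin(πy))` at `y = q`.
Induction gives `(d/dy)^j (1 / sin(πy)) = π^j P_j(cot(πy)) / sin(πy)` for a polynomial `P_j`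
with rational coefficients, and for rational `q` with `sin(πq) ≠ 0` the numbers
`cot(πq)` and `1 / sin(πq)` are algebraic.
-/

open Real Polynomial Nat

theorem Real.contDiffAt_Gamma {x : ℝ} (hx : ∀ m : ℕ, x ≠ -m) {n : WithTop ℕ∞} :
    ContDiffAt ℝ n Gamma x := by
  have hx' : ∀ m : ℕ, (x : ℂ) ≠ -m := by exact_mod_cast hx
  have h : ContDiffAt ℂ n (fun z => (Complex.Gamma z)⁻¹⁻¹) x :=
    Complex.differentiable_one_div_Gamma.contDiff.contDiffAt.inv
      (inv_ne_zero (Complex.Gamma_ne_zero hx'))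
  simpa [Complex.Gamma_ofReal] using h.real_of_complex

theorem IsAlgebraic.aeval {K L : Type*} [Field K] [Field L] [Algebra K L] {x : L}
    (hx : IsAlgebraic K x) (p : K[X]) : IsAlgebraic K (aeval x p) := by
  rw [← mem_algebraicClosure_iff] at hx ⊢
  have hle : Algebra.adjoin K {x} ≤ (algebraicClosure K L).toSubalgebra :=
    Algebra.adjoin_le (Set.singleton_subset_iff.mpr hx)
  exact hle (aeval_mem_adjoin_singleton K x)

theorem iteratedDeriv_fun_mul_div_factorial {𝕜 : Type*} [NontriviallyNormedField 𝕜] [CharZero 𝕜]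
    {f g : 𝕜 → 𝕜} {x : 𝕜} {n : ℕ} (hf : ContDiffAt 𝕜 n f x) (hg : ContDiffAt 𝕜 n g x) :
    iteratedDeriv n (fun y => f y * g y) x / n ! =
      ∑ i ∈ Finset.range (n + 1),
        iteratedDeriv i f x * iteratedDeriv (n - i) g x / (i ! * (n - i)!) := by
  rw [iteratedDeriv_fun_mul hf hg, Finset.sum_div]
  refine Finset.sum_congr rfl fun i hi => ?_
  have hn : (n ! : 𝕜) ≠ 0 := Nat.cast_ne_zero.mpr n.factorial_ne_zero
  rw [Nat.cast_choose 𝕜 (Finset.mem_range_succ_iff.mp hi)]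
  field_simp

theorem Real.isAlgebraic_cot_rat_mul_pi (q : ℚ) : IsAlgebraic ℤ (cot (q * π)) := by
  simpa [cot_eq_cos_div_sin, tan_eq_sin_div_cos] using (isAlgebraic_tan_rat_mul_pi q).inv
noncomputable def cscDerivStep (P : ℚ[X]) : ℚ[X] := -(X * P + (1 + X ^ 2) * derivative P)

theorem hasDerivAt_aeval_cot_div_sin (c : ℝ) (P : ℚ[X]) {x : ℝ} (hx : sin (c * x) ≠ 0) :
    HasDerivAt (fun y => aeval (cot (c * y)) P / sin (c * y))
      (c * aeval (cot (c * x)) (cscDerivStep P) / sin (c * x)) x := by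
  have hlin : HasDerivAt (fun y => c * y) c x := by simpa using (hasDerivAt_id x).const_mul c
  have hsin : HasDerivAt (fun y => sin (c * y)) (cos (c * x) * c) x :=
    (hasDerivAt_sin (c * x)).comp x hlin
  have hcos : HasDerivAt (fun y => cos (c * y)) (-sin (c * x) * c) x :=
    (hasDerivAt_cos (c * x)).comp x hlin
  have hcot := hcos.fun_div hsin hx
  have hP := ((P.hasDerivAt_aeval _).comp x hcot).fun_div hsin hx
  simp only [cot_eq_cos_div_sin]
  refine hP.congr_deriv ?_
  simp only [Function.comp_def, cscDerivStep, map_neg, map_add, map_mul, map_pow, map_one, aeval_X]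
  field_simp
  ring

theorem iteratedDeriv_aeval_cot_div_sin (c : ℝ) (P : ℚ[X]) (n : ℕ) {x : ℝ}
    (hx : sin (c * x) ≠ 0) :
    iteratedDeriv n (fun y => aeval (cot (c * y)) P / sin (c * y)) x =
      c ^ n * aeval (cot (c * x)) (cscDerivStep^[n] P) / sin (c * x) := by
  induction n generalizing x with
  | zero => simp
  | succ n ih =>
    have hnhds : {y | sin (c * y) ≠ 0} ∈ nhds x :=
      (isOpen_ne_fun (by fun_prop) continuous_const).mem_nhds hx
    have heq : iteratedDeriv n (fun y => aeval (cot (c * y)) P / sin (c * y)) =ᶠ[nhds x]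
        fun y => c ^ n * (aeval (cot (c * y)) (cscDerivStep^[n] P) / sin (c * y)) := by
      filter_upwards [hnhds] with y hy
      rw [ih hy, mul_div_assoc]
    rw [iteratedDeriv_succ, heq.deriv_eq,
      ((hasDerivAt_aeval_cot_div_sin c _ hx).const_mul (c ^ n)).deriv,
      Function.iterate_succ_apply']
    ring

theorem iteratedDeriv_div_sin (a c : ℝ) (n : ℕ) {x : ℝ} (hx : sin (c * x) ≠ 0) :
    iteratedDeriv n (fun y => a / sin (c * y)) x =
      a * c ^ n * aeval (cot (c * x)) (cscDerivStep^[n] 1) / sin (c * x) := by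
  have h := iteratedDeriv_aeval_cot_div_sin c 1 n hx
  simp only [map_one] at h
  simp only [div_eq_mul_inv a, iteratedDeriv_const_mul_field, ← one_div, h]
  ring

/-- For rational `q` with `2q ∉ ℤ`, the `j`-th Taylor coefficient of
`Γ(q+t)Γ(1−q−t)` is an algebraic multiple of `π^(j+1)`. -/
theorem gamma_reflection_coeff_algebraic_multiple_pi
    (q : ℚ) (hq : ¬ ∃ k : ℤ, 2 * q = (k : ℚ)) (j : ℕ) :
    ∃ d : ℝ, IsAlgebraic ℚ d ∧
      (∑ i ∈ Finset.range (j + 1),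
          (-1 : ℝ) ^ (j - i) * iteratedDeriv i Real.Gamma (q : ℝ) *
            iteratedDeriv (j - i) Real.Gamma (1 - (q : ℝ)) /
              ((Nat.factorial i : ℝ) * (Nat.factorial (j - i) : ℝ))) =
        d * π ^ (j + 1) := by
  have hq_int : ∀ n : ℤ, (q : ℝ) ≠ n := by
    rintro n hn
    obtain rfl : q = n := by exact_mod_cast hn
    exact hq ⟨2 * n, by push_cast; ring⟩
  have hsin : sin (π * q) ≠ 0 := by
    rw [mul_comm, Ne, sin_eq_zero_iff]
    rintro ⟨n, hn⟩
    exact hq_int n (mul_right_cancel₀ pi_ne_zero hn).symm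
  have hΓ : ContDiffAt ℝ j Gamma q :=
    contDiffAt_Gamma fun m => by exact_mod_cast hq_int (-m)
  have hΓ_one_sub : ContDiffAt ℝ j (fun y => Gamma (1 - y)) q :=
    (contDiffAt_Gamma fun m h => hq_int (m + 1) (by push_cast; linarith)).comp _
      (contDiffAt_const.sub contDiffAt_id)
  -- Leibniz rule applied to `Γ(y) Γ(1 - y) = π / sin(πy)`
  have hsum := iteratedDeriv_fun_mul_div_factorial hΓ hΓ_one_sub
  simp only [iteratedDeriv_comp_const_sub, smul_eq_mul, Gamma_mul_Gamma_one_sub,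
    iteratedDeriv_div_sin π π j hsin, mul_left_comm (iteratedDeriv _ Gamma (q : ℝ)),
    ← mul_assoc] at hsum
  have hcot : IsAlgebraic ℚ (cot (π * q)) := by
    simpa [mul_comm] using (isAlgebraic_cot_rat_mul_pi q).extendScalars Int.cast_injective
  have hsin_alg : IsAlgebraic ℚ (sin (π * q)) := by
    simpa [mul_comm] using (isAlgebraic_sin_rat_mul_pi q).extendScalars Int.cast_injective
  refine ⟨aeval (cot (π * q)) (cscDerivStep^[j] 1) / (sin (π * q) * j !), ?_, ?_⟩
  · exact (hcot.aeval _).mul (hsin_alg.mul (isAlgebraic_natCast _)).inv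
  · rw [← hsum]
    ring
end

section
/- Let q be a rational number with 2q ∉ ℤ. Then the set of natural numbers j for which the j-th iterated derivative at 0 of the function t ↦ π / sin(π(q + t)) is nonzero is infinite. -/
/-!
If only finitely many derivatives of `f t = π / sin (π (q + t))` at `0` were nonzero, then `f`,
being analytic, would agree near `0` with its Taylor polynomial, and by the identity theorem on
the whole interval around `0` between two consecutive zeros of `sin (π (q + ·))`. The product of
that polynomial with `sin (π (q + ·))` would then be identically `π` on the interval, although it
is continuous and vanishes at the endpoint.
-/

open Real Set Filter Topology

section Taylor

variable {𝕜 E : Type*} [NontriviallyNormedField 𝕜] [NormedAddCommGroup E] [NormedSpace 𝕜 E]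

noncomputable def taylorSum (f : 𝕜 → E) (N : ℕ) : 𝕜 → E :=
  fun z ↦ ∑ i ∈ Finset.range N, (z ^ i / i.factorial) • iteratedDeriv i f 0

theorem analyticAt_taylorSum (f : 𝕜 → E) (N : ℕ) (z : 𝕜) : AnalyticAt 𝕜 (taylorSum f N) z :=
  Finset.analyticAt_fun_sum _ fun _ _ ↦ by fun_prop

variable [CharZero 𝕜]

theorem iteratedDeriv_taylorSum_zero (f : 𝕜 → E) (N i : ℕ) :
    iteratedDeriv i (taylorSum f N) 0 = if i < N then iteratedDeriv i f 0 else 0 := by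
  unfold taylorSum
  simp (disch := fun_prop) only [iteratedDeriv_fun_sum, iteratedDeriv_smul_const,
    iteratedDeriv_div_const, iteratedDeriv_fun_pow_zero]
  simp [ite_div, Nat.factorial_ne_zero]

variable [CompleteSpace E]

theorem AnalyticAt.eventuallyEq_taylorSum_of_iteratedDeriv_eq_zero {f : 𝕜 → E}
    (hf : AnalyticAt 𝕜 f 0) {N : ℕ} (hN : ∀ i, N ≤ i → iteratedDeriv i f 0 = 0) :
    f =ᶠ[𝓝 0] taylorSum f N := by
  have hT := analyticAt_taylorSum f N 0
  have hsub : analyticOrderAt (fun z ↦ f z - taylorSum f N z) 0 = ⊤ := by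
    refine ENat.eq_top_iff_forall_ge.mpr fun n ↦ ?_
    rw [natCast_le_analyticOrderAt_iff_iteratedDeriv_eq_zero (hf.fun_sub hT)]
    intro i _
    rw [iteratedDeriv_fun_sub hf.contDiffAt hT.contDiffAt, iteratedDeriv_taylorSum_zero,
      sub_eq_zero]
    split_ifs with hi
    · rfl
    · exact hN i (not_lt.mp hi)
  filter_upwards [analyticOrderAt_eq_top.mp hsub] with z hz
  exact sub_eq_zero.mp hz

theorem AnalyticOnNhd.eqOn_taylorSum_of_iteratedDeriv_eq_zero {f : 𝕜 → E} {U : Set 𝕜}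
    (hf : AnalyticOnNhd 𝕜 f U) (hU : IsPreconnected U) (h0 : 0 ∈ U) {N : ℕ}
    (hN : ∀ i, N ≤ i → iteratedDeriv i f 0 = 0) : EqOn f (taylorSum f N) U :=
  hf.eqOn_of_preconnected_of_eventuallyEq (fun z _ ↦ analyticAt_taylorSum f N z) hU h0
    ((hf 0 h0).eventuallyEq_taylorSum_of_iteratedDeriv_eq_zero hN)

end Taylor

theorem eq_zero_of_forall_mul_eq_of_mem_closure {X R : Type*} [TopologicalSpace X]
    [TopologicalSpace R] [MulZeroClass R] [ContinuousMul R] [T1Space R] {f g : X → R}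
    {s : Set X} {x : X} {c : R} (hx : x ∈ closure s) (hf : ContinuousAt f x)
    (hg : ContinuousAt g x) (hgx : g x = 0) (h : ∀ y ∈ s, f y * g y = c) : c = 0 := by
  have hfg : f x * g x ∈ closure {c} :=
    (hf.mul hg).continuousWithinAt.mem_closure hx fun y hy ↦ h y hy
  rwa [closure_singleton, mem_singleton_iff, hgx, mul_zero, eq_comm] at hfg

theorem Real.sin_pi_mul_ne_zero_of_mem_Ioo {n : ℤ} {x : ℝ} (hx : x ∈ Ioo (n : ℝ) (n + 1)) :
    sin (π * x) ≠ 0 := by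
  refine sin_ne_zero_iff.mpr fun k hk ↦ ?_
  obtain rfl : (k : ℝ) = x := mul_left_cancel₀ pi_ne_zero (by rw [← hk, mul_comm])
  have h₁ : n < k := by exact_mod_cast hx.1
  have h₂ : k < n + 1 := by exact_mod_cast hx.2
  omega

/-- For rational `q` with `2q ∉ ℤ`, infinitely many derivatives at `0` of
`t ↦ π / sin (π (q + t))` are nonzero. -/
theorem iteratedDeriv_pi_div_sin_nonzero_infinitely_often
    (q : ℚ) (hq : ¬ ∃ k : ℤ, 2 * q = (k : ℚ)) :
    {j : ℕ |
      iteratedDeriv j (fun t : ℝ => π / Real.sin (π * ((q : ℝ) + t))) 0 ≠ 0}.Infinite := by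
  set f := fun t : ℝ => π / Real.sin (π * ((q : ℝ) + t))
  set n := ⌊q⌋
  have hn : (n : ℝ) < q ∧ (q : ℝ) < n + 1 := by
    have hnq : (n : ℚ) < q :=
      (Int.floor_le q).lt_of_ne fun h ↦ hq ⟨2 * n, by push_cast; linarith⟩
    exact ⟨by exact_mod_cast hnq, by exact_mod_cast Int.lt_floor_add_one q⟩
  set U := Ioo (n - q : ℝ) (n + 1 - q)
  have h0 : (0 : ℝ) ∈ U := ⟨by linarith, by linarith⟩
  have hsin : ∀ t ∈ U, sin (π * (q + t)) ≠ 0 := fun t ht ↦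
    sin_pi_mul_ne_zero_of_mem_Ioo ⟨by linarith [ht.1], by linarith [ht.2]⟩
  have hf : AnalyticOnNhd ℝ f U := fun t ht ↦ analyticAt_const.div (by fun_prop) (hsin t ht)
  by_contra hfin
  obtain ⟨N, hN⟩ := (Set.not_infinite.mp hfin).bddAbove
  have hfT := hf.eqOn_taylorSum_of_iteratedDeriv_eq_zero isPreconnected_Ioo h0 (N := N + 1)
    fun i hi ↦ by by_contra h; have := hN h; omega
  have hb : (n + 1 - q : ℝ) ∈ closure U := by
    rw [closure_Ioo (by linarith)]
    exact ⟨by linarith, le_rfl⟩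
  have hsin_b : sin (π * (q + (n + 1 - q))) = 0 := by
    simpa [mul_comm π] using sin_int_mul_pi (n + 1)
  have hprod : ∀ t ∈ U, taylorSum f (N + 1) t * sin (π * (q + t)) = π := fun t ht ↦ by
    rw [← hfT ht]
    exact div_mul_cancel₀ _ (hsin t ht)
  exact pi_ne_zero <| eq_zero_of_forall_mul_eq_of_mem_closure hb
    (analyticAt_taylorSum f (N + 1) _).continuousAt (by fun_prop) hsin_b hprod
end

section
/- The second derivative of the real Gamma function at 1 equals γ² + π²/6; that is, Γ^(2)(1) = γ² + π²/6. -/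
/-!
With `ψ = Γ'/Γ` we have `Γ' = Γ ψ`, hence `Γ''(1) = Γ(1) (ψ(1)² + ψ'(1)) = γ² + ψ'(1)`.
Differentiating the logarithms of the reflection formula `Γ(s) Γ(1 - s) = π / sin(π s)` and of
Legendre's duplication formula twice gives
`ψ'(s) + ψ'(1 - s) = π² / sin²(π s)` and `ψ'(s) + ψ'(s + 1/2) = 4 ψ'(2 s)`.
At `s = 1/2` the first yields `ψ'(1/2) = π²/2`, and the second then yields `ψ'(1) = π²/6`.
-/

open Real Filter Topology

namespace Real

theorem analyticAt_Gamma_s18 {s : ℝ} (hs : Gamma s ≠ 0) : AnalyticAt ℝ Gamma s := by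
  have hC : AnalyticAt ℂ Complex.Gamma s := by
    have hinv : Complex.Gamma = (fun z => (Complex.Gamma z)⁻¹)⁻¹ := by funext z; simp
    rw [hinv]
    exact (Complex.differentiable_one_div_Gamma.analyticAt (s : ℂ)).inv
      (by simpa [Complex.Gamma_ofReal] using hs)
  have hre : Gamma = fun t : ℝ => (Complex.Gamma t).re := funext fun t => by
    simp [Complex.Gamma_ofReal]
  rw [hre]
  exact Complex.reCLM.analyticAt _ |>.comp (hC.restrictScalars.comp (Complex.ofRealCLM.analyticAt s))

theorem differentiableAt_Gamma_comp_affine {a b s : ℝ} (h : Gamma (a * s + b) ≠ 0) :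
    DifferentiableAt ℝ (fun t => Gamma (a * t + b)) s :=
  (analyticAt_Gamma_s18 h).differentiableAt.comp (f := fun t => a * t + b) s (by fun_prop)

theorem Gamma_mul_Gamma_one_sub_ne_zero {s : ℝ} (hs : sin (π * s) ≠ 0) :
    Gamma s * Gamma (1 - s) ≠ 0 := by
  rw [Gamma_mul_Gamma_one_sub]
  exact div_ne_zero pi_ne_zero hs

theorem Gamma_mul_Gamma_add_half_ne_zero {s : ℝ} (hs : Gamma (2 * s) ≠ 0) :
    Gamma s * Gamma (s + 1 / 2) ≠ 0 := by
  rw [Gamma_mul_Gamma_add_half]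
  positivity

noncomputable def digamma : ℝ → ℝ := logDeriv Gamma

theorem analyticAt_digamma {s : ℝ} (hs : Gamma s ≠ 0) : AnalyticAt ℝ digamma s :=
  (analyticAt_Gamma_s18 hs).deriv.div (analyticAt_Gamma_s18 hs) hs

theorem digamma_one : digamma 1 = -eulerMascheroniConstant := by
  rw [digamma, logDeriv_apply, Gamma_one, div_one, eulerMascheroniConstant_eq_neg_deriv, neg_neg]

theorem logDeriv_Gamma_comp_affine {a b s : ℝ} (h : Gamma (a * s + b) ≠ 0) :
    logDeriv (fun t => Gamma (a * t + b)) s = a * digamma (a * s + b) := by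
  rw [show (fun t => Gamma (a * t + b)) = Gamma ∘ (fun t => a * t + b) from rfl,
    logDeriv_comp (g := fun t => a * t + b) (analyticAt_Gamma_s18 h).differentiableAt (by fun_prop),
    digamma, mul_comm]
  congr 1
  simp

theorem logDeriv_sin_mul (c s : ℝ) :
    logDeriv (fun t => sin (c * t)) s = c * cos (c * s) / sin (c * s) := by
  have h := ((hasDerivAt_id s).const_mul c).sin
  simp only [id, mul_one] at h
  rw [logDeriv_apply, h.deriv, mul_comm]

theorem logDeriv_rpow_affine {c : ℝ} (hc : 0 < c) (a b s : ℝ) :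
    logDeriv (fun t => c ^ (a * t + b)) s = a * log c := by
  have h := ((hasDerivAt_id s).const_mul a |>.add_const b).const_rpow hc
  simp only [id, mul_one] at h
  rw [logDeriv_apply, h.deriv, mul_div_assoc, div_self (rpow_pos_of_pos hc _).ne', mul_one,
    mul_comm]

theorem digamma_sub_digamma_one_sub {s : ℝ} (hs : sin (π * s) ≠ 0) :
    digamma s - digamma (1 - s) = -(π * cos (π * s) / sin (π * s)) := by
  have hprod := Gamma_mul_Gamma_one_sub_ne_zero hs
  have h1 : Gamma s ≠ 0 := left_ne_zero_of_mul hprod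
  have h2 : Gamma (-1 * s + 1) ≠ 0 := by simpa [neg_add_eq_sub] using right_ne_zero_of_mul hprod
  have key : logDeriv (fun t => Gamma t * Gamma (-1 * t + 1)) s =
      logDeriv (fun t => π / sin (π * t)) s := by
    congr 1; funext t; rw [← Gamma_mul_Gamma_one_sub]; ring_nf
  rw [logDeriv_mul (g := fun t => Gamma (-1 * t + 1)) s h1 h2
      (analyticAt_Gamma_s18 h1).differentiableAt (differentiableAt_Gamma_comp_affine h2),
    logDeriv_Gamma_comp_affine h2, ← digamma,
    logDeriv_div (f := fun _ => π) s pi_ne_zero hs (by fun_prop) (by fun_prop), logDeriv_const,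
    logDeriv_sin_mul, show -1 * s + 1 = 1 - s by ring, Pi.zero_apply] at key
  linarith

theorem digamma_add_digamma_add_half {s : ℝ} (hs : Gamma (2 * s) ≠ 0) :
    digamma s + digamma (s + 1 / 2) = 2 * digamma (2 * s) - 2 * log 2 := by
  have hprod := Gamma_mul_Gamma_add_half_ne_zero hs
  have h1 : Gamma s ≠ 0 := left_ne_zero_of_mul hprod
  have h2 : Gamma (1 * s + 1 / 2) ≠ 0 := by simpa using right_ne_zero_of_mul hprod
  have h3 : Gamma (2 * s + 0) ≠ 0 := by simpa using hs
  have hpow : (2 : ℝ) ^ (-2 * s + 1) ≠ 0 := (rpow_pos_of_pos two_pos _).ne'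
  have key : logDeriv (fun t => Gamma t * Gamma (1 * t + 1 / 2)) s =
      logDeriv (fun t => Gamma (2 * t + 0) * (2 : ℝ) ^ (-2 * t + 1) * √π) s := by
    congr 1; funext t; simp only [one_mul, add_zero, Gamma_mul_Gamma_add_half]; ring_nf
  rw [logDeriv_mul (g := fun t => Gamma (1 * t + 1 / 2)) s h1 h2
      (analyticAt_Gamma_s18 h1).differentiableAt (differentiableAt_Gamma_comp_affine h2),
    logDeriv_mul_const _ _ (by positivity),
    logDeriv_mul (f := fun t => Gamma (2 * t + 0)) s h3 hpow
      (differentiableAt_Gamma_comp_affine h3) (by fun_prop (disch := norm_num)),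
    logDeriv_Gamma_comp_affine h2, logDeriv_Gamma_comp_affine h3, ← digamma,
    logDeriv_rpow_affine two_pos] at key
  simp only [one_mul, add_zero] at key
  linarith

theorem hasDerivAt_pi_mul_cos_div_sin {s : ℝ} (hs : sin (π * s) ≠ 0) :
    HasDerivAt (fun t => π * cos (π * t) / sin (π * t)) (-(π ^ 2 / sin (π * s) ^ 2)) s := by
  have hlin : HasDerivAt (fun t => π * t) π s := by simpa using (hasDerivAt_id s).const_mul π
  refine ((hlin.cos.const_mul π).fun_div hlin.sin hs).congr_deriv ?_
  field_simp
  linear_combination -sin_sq_add_cos_sq (π * s)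

theorem deriv_digamma_add_deriv_digamma_one_sub {s : ℝ} (hs : sin (π * s) ≠ 0) :
    deriv digamma s + deriv digamma (1 - s) = π ^ 2 / sin (π * s) ^ 2 := by
  have hprod := Gamma_mul_Gamma_one_sub_ne_zero hs
  have hL : HasDerivAt (fun t => digamma t - digamma (1 - t))
      (deriv digamma s - deriv digamma (1 - s) * (-1)) s :=
    (analyticAt_digamma (left_ne_zero_of_mul hprod)).differentiableAt.hasDerivAt.sub
      ((analyticAt_digamma (right_ne_zero_of_mul hprod)).differentiableAt.hasDerivAt.comp s
        ((hasDerivAt_id s).const_sub 1))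
  have hsin : ∀ᶠ t in 𝓝 s, sin (π * t) ≠ 0 :=
    (continuous_sin.comp (continuous_const_mul π)).continuousAt.eventually_ne hs
  have hR := (hasDerivAt_pi_mul_cos_div_sin hs).neg.congr_of_eventuallyEq
    (hsin.mono fun t ht => digamma_sub_digamma_one_sub ht)
  linarith [hL.unique hR]

theorem deriv_digamma_add_deriv_digamma_add_half {s : ℝ} (hs : Gamma (2 * s) ≠ 0) :
    deriv digamma s + deriv digamma (s + 1 / 2) = 4 * deriv digamma (2 * s) := by
  have hprod := Gamma_mul_Gamma_add_half_ne_zero hs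
  have hL : HasDerivAt (fun t => digamma t + digamma (t + 1 / 2))
      (deriv digamma s + deriv digamma (s + 1 / 2)) s :=
    (analyticAt_digamma (left_ne_zero_of_mul hprod)).differentiableAt.hasDerivAt.add
      ((analyticAt_digamma (right_ne_zero_of_mul hprod)).differentiableAt.hasDerivAt.comp_add_const
        s (1 / 2))
  have hR : HasDerivAt (fun t => 2 * digamma (2 * t) - 2 * log 2)
      (2 * (deriv digamma (2 * s) * 2)) s :=
    (((analyticAt_digamma hs).differentiableAt.hasDerivAt.comp s
      ((hasDerivAt_id s).const_mul 2 |>.congr_deriv (mul_one 2))).const_mul 2).sub_const _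
  have hΓ : ∀ᶠ t in 𝓝 s, Gamma (2 * t) ≠ 0 :=
    ((analyticAt_Gamma_s18 hs).continuousAt.comp (continuous_const_mul 2).continuousAt).eventually_ne hs
  linarith [hL.unique (hR.congr_of_eventuallyEq
    (hΓ.mono fun t ht => digamma_add_digamma_add_half ht))]

theorem deriv_digamma_one_half : deriv digamma (1 / 2) = π ^ 2 / 2 := by
  have hsin : sin (π * (1 / 2)) = 1 := by rw [mul_one_div, sin_pi_div_two]
  have h := deriv_digamma_add_deriv_digamma_one_sub (s := 1 / 2) (by rw [hsin]; exact one_ne_zero)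
  rw [hsin] at h
  norm_num at h
  linarith

theorem deriv_digamma_one : deriv digamma 1 = π ^ 2 / 6 := by
  have h := deriv_digamma_add_deriv_digamma_add_half (s := 1 / 2) (by norm_num)
  norm_num [deriv_digamma_one_half] at h
  linarith

theorem iteratedDeriv_two_Gamma {s : ℝ} (hs : Gamma s ≠ 0) :
    iteratedDeriv 2 Gamma s = Gamma s * (digamma s ^ 2 + deriv digamma s) := by
  have hΓ : ∀ᶠ t in 𝓝 s, Gamma t ≠ 0 := (analyticAt_Gamma_s18 hs).continuousAt.eventually_ne hs
  have hderiv : deriv Gamma =ᶠ[𝓝 s] fun t => Gamma t * digamma t :=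
    hΓ.mono fun t ht => (mul_div_cancel₀ _ ht).symm
  rw [iteratedDeriv_succ, iteratedDeriv_one, hderiv.deriv_eq,
    ((analyticAt_Gamma_s18 hs).differentiableAt.hasDerivAt.fun_mul
      (analyticAt_digamma hs).differentiableAt.hasDerivAt).deriv, hderiv.eq_of_nhds]
  ring

end Real

/-- `Γ''(1) = γ² + π²/6`. -/
theorem gamma_second_deriv_one :
    iteratedDeriv 2 Real.Gamma 1 =
      Real.eulerMascheroniConstant ^ 2 + π ^ 2 / 6 := by
  rw [Real.iteratedDeriv_two_Gamma (by simp), Real.Gamma_one, Real.digamma_one,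
    Real.deriv_digamma_one]
  ring
end

section
/- The third derivative of the real Gamma function at 1 equals −γ³ − (π²/2)·γ − 2ζ(3); that is, Γ^(3)(1) = −γ³ − 3·(π²/6)·γ − 2·ζ(3). -/
/-!
Euler's limit gives `log Γ(x) = lim (x log n + log n! - ∑_{m ≤ n} log (x + m))` for `x > 0`. The
derivatives `log n - ∑_{m ≤ n} 1/(x + m)` converge uniformly on bounded subintervals of `(0, ∞)`
to `ψ(x) = -γ + ∑_k (1/(k+1) - 1/(x+k))`, so `Γ' = Γ ψ`. Termwise differentiation gives
`ψ' = ζ(2, ·)` and `ζ(s, ·)' = -s ζ(s+1, ·)` for the Hurwitz sums `ζ(s, x) = ∑_k (x+k)^(-s)`, hence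
`Γ''' = Γ (ψ³ + 3 ψ ζ(2, ·) - 2 ζ(3, ·))`. Finally `ψ(1) = -γ`, `ζ(2, 1) = π²/6` and
`ζ(3, 1) = ζ(3)`.
-/

open Real Filter Topology Finset

namespace Real

noncomputable def digammaSeries (x : ℝ) : ℝ :=
  -eulerMascheroniConstant + ∑' k : ℕ, (((k : ℝ) + 1)⁻¹ - (x + k)⁻¹)

noncomputable def hurwitzSeries (s : ℕ) (x : ℝ) : ℝ := ∑' k : ℕ, ((x + k) ^ s)⁻¹

lemma summable_inv_add_nat_pow (a : ℝ) {s : ℕ} (hs : 1 < s) :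
    Summable fun n : ℕ ↦ ((a + n) ^ s)⁻¹ := by
  refine .of_norm ?_
  convert (summable_one_div_nat_add_rpow a s).2 (by exact_mod_cast hs) using 2 with n
  rw [norm_inv, norm_pow, norm_eq_abs, rpow_natCast, add_comm, one_div]

lemma hasDerivAt_inv_add_pow (k : ℝ) (s : ℕ) {y : ℝ} (hy : y + k ≠ 0) :
    HasDerivAt (fun z ↦ ((z + k) ^ s)⁻¹) (-s * ((y + k) ^ (s + 1))⁻¹) y := by
  refine (((hasDerivAt_id' y).add_const k).fun_pow s).fun_inv (pow_ne_zero s hy) |>.congr_deriv ?_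
  rcases s with _ | s
  · simp
  · simp only [Nat.cast_add, Nat.cast_one, add_tsub_cancel_right]
    field_simp
    ring

lemma hasDerivAt_hurwitzSeries {s : ℕ} (hs : 1 < s) {x : ℝ} (hx : 0 < x) :
    HasDerivAt (hurwitzSeries s) (-s * hurwitzSeries (s + 1) x) x := by
  have hx2 : x / 2 < x := by linarith
  have hpos : ∀ n : ℕ, ∀ y ∈ Set.Ioi (x / 2), 0 < y + n := fun n y hy ↦ by
    have : 0 < y := lt_trans (by positivity) hy
    positivity
  have h := hasDerivAt_tsum_of_isPreconnected
    ((summable_inv_add_nat_pow (x / 2) (by omega : 1 < s + 1)).mul_left (s : ℝ)) isOpen_Ioi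
    isPreconnected_Ioi (fun n y hy ↦ hasDerivAt_inv_add_pow (n : ℝ) s (hpos n y hy).ne')
    (fun n y hy ↦ ?_) hx2 (summable_inv_add_nat_pow x hs) hx2
  · rwa [tsum_mul_left] at h
  · rw [norm_mul, norm_neg, Real.norm_natCast, norm_inv, norm_pow, norm_of_nonneg (hpos n y hy).le]
    gcongr
    exact hy.le

lemma hasDerivAt_digammaSeries {x : ℝ} (hx : 0 < x) :
    HasDerivAt digammaSeries (hurwitzSeries 2 x) x := by
  obtain ⟨a, ha, hxa, h1a⟩ : ∃ a, 0 < a ∧ a < x ∧ a < 1 :=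
    ⟨min x 1 / 2, by positivity, by linarith [min_le_left x 1], by linarith [min_le_right x 1]⟩
  have hpos : ∀ n : ℕ, ∀ y ∈ Set.Ioi a, 0 < y + n := fun n y hy ↦ by
    have : 0 < y := ha.trans hy
    positivity
  have hterm : ∀ n : ℕ, ∀ y ∈ Set.Ioi a,
      HasDerivAt (fun z : ℝ ↦ ((n : ℝ) + 1)⁻¹ - (z + n)⁻¹) ((y + n) ^ 2)⁻¹ y := fun n y hy ↦ by
    simpa using (hasDerivAt_inv_add_pow (n : ℝ) 1 (hpos n y hy).ne').const_sub (((n : ℝ) + 1)⁻¹)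
  have hzero : Summable fun n : ℕ ↦ ((n : ℝ) + 1)⁻¹ - (1 + (n : ℝ))⁻¹ := by
    simp [add_comm]
  have h := hasDerivAt_tsum_of_isPreconnected (summable_inv_add_nat_pow a one_lt_two) isOpen_Ioi
    isPreconnected_Ioi hterm (fun n y hy ↦ ?_) h1a hzero hxa
  · exact h.const_add _
  · rw [norm_inv, norm_pow, norm_of_nonneg (hpos n y hy).le]
    gcongr
    exact hy.le

lemma tendsto_log_sub_sum_range_succ_inv :
    Tendsto (fun n : ℕ ↦ log n - ∑ m ∈ range (n + 1), ((m : ℝ) + 1)⁻¹) atTop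
      (𝓝 (-eulerMascheroniConstant)) := by
  have h := (tendsto_harmonic_sub_log.comp (tendsto_add_atTop_nat 1)).neg.sub
    tendsto_log_nat_add_one_sub_log
  rw [sub_zero] at h
  refine h.congr fun n ↦ ?_
  simp [harmonic]

lemma norm_inv_add_one_sub_inv_le {b y : ℝ} (hy : y ∈ Set.Ioo 0 b) {n : ℕ} (hn : 1 ≤ n) :
    ‖((n : ℝ) + 1)⁻¹ - (y + n)⁻¹‖ ≤ (b + 1) * ((n : ℝ) ^ 2)⁻¹ := by
  obtain ⟨hy0, hyb⟩ := hy
  have hn' : (1 : ℝ) ≤ n := by exact_mod_cast hn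
  rw [inv_sub_inv (by positivity) (by positivity), norm_div, norm_mul,
    norm_of_nonneg (by positivity : (0 : ℝ) ≤ n + 1), norm_of_nonneg (by positivity : 0 ≤ y + n),
    div_eq_mul_inv]
  refine mul_le_mul ?_ (inv_anti₀ (by positivity) (by nlinarith)) (by positivity) (by linarith)
  rw [norm_eq_abs, abs_le]
  constructor <;> linarith

lemma tendstoUniformlyOn_sum_range_inv_add_one_sub_inv (b : ℝ) :
    TendstoUniformlyOn (fun N (y : ℝ) ↦ ∑ m ∈ range N, (((m : ℝ) + 1)⁻¹ - (y + m)⁻¹))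
      (fun y : ℝ ↦ ∑' m : ℕ, (((m : ℝ) + 1)⁻¹ - (y + m)⁻¹)) atTop (Set.Ioo 0 b) :=
  tendstoUniformlyOn_tsum_nat_eventually ((summable_nat_pow_inv.2 one_lt_two).mul_left (b + 1))
    (eventually_ge_atTop 1 |>.mono fun _ hn _ hy ↦ norm_inv_add_one_sub_inv_le hy hn)

lemma hasDerivAt_logGammaSeq (n : ℕ) {x : ℝ} (hx : 0 < x) :
    HasDerivAt (BohrMollerup.logGammaSeq · n) (log n - ∑ m ∈ range (n + 1), (x + m)⁻¹) x := by
  have hlog : ∀ m ∈ range (n + 1), HasDerivAt (fun y ↦ log (y + m)) (x + m)⁻¹ x := fun m _ ↦ by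
    simpa using ((hasDerivAt_id' x).add_const (m : ℝ)).log (by positivity)
  simpa [BohrMollerup.logGammaSeq] using
    (((hasDerivAt_id' x).mul_const (log n)).add_const _).fun_sub (HasDerivAt.fun_sum hlog)

lemma tendstoUniformlyOn_deriv_logGammaSeq (b : ℝ) :
    TendstoUniformlyOn (fun (n : ℕ) (y : ℝ) ↦ log n - ∑ m ∈ range (n + 1), (y + m)⁻¹)
      digammaSeries atTop (Set.Ioo 0 b) := by
  have hsum := tendstoUniformlyOn_sum_range_inv_add_one_sub_inv b
  have h := (tendsto_log_sub_sum_range_succ_inv.tendstoUniformlyOn_const (Set.Ioo 0 b)).add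
    fun v hv ↦ (tendsto_add_atTop_nat 1).eventually (hsum v hv)
  refine h.congr (.of_forall fun n y _ ↦ ?_)
  simp only [Pi.add_apply, sum_sub_distrib]
  ring

lemma hasDerivAt_log_Gamma {x : ℝ} (hx : 0 < x) :
    HasDerivAt (fun y ↦ log (Gamma y)) (digammaSeries x) x :=
  hasDerivAt_of_tendstoUniformlyOn isOpen_Ioo (tendstoUniformlyOn_deriv_logGammaSeq (x + 1))
    (.of_forall fun n _ hy ↦ hasDerivAt_logGammaSeq n hy.1)
    (fun _ hy ↦ BohrMollerup.tendsto_log_gamma hy.1) ⟨hx, by linarith⟩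

lemma hasDerivAt_Gamma_of_pos {x : ℝ} (hx : 0 < x) :
    HasDerivAt Gamma (Gamma x * digammaSeries x) x := by
  have hΓ : HasDerivAt Gamma (deriv Gamma x) x :=
    (differentiableAt_Gamma fun m ↦ (lt_of_le_of_lt (by simp) hx).ne').hasDerivAt
  have hψ := (hΓ.log (Gamma_pos_of_pos hx).ne').unique (hasDerivAt_log_Gamma hx)
  rwa [← hψ, mul_div_cancel₀ _ (Gamma_pos_of_pos hx).ne']

lemma hasDerivAt_Gamma_mul {f : ℝ → ℝ} {f' x : ℝ} (hx : 0 < x) (hf : HasDerivAt f f' x) :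
    HasDerivAt (fun y ↦ Gamma y * f y) (Gamma x * (digammaSeries x * f x + f')) x :=
  ((hasDerivAt_Gamma_of_pos hx).mul hf).congr_deriv (by ring)

lemma deriv_deriv_Gamma {x : ℝ} (hx : 0 < x) :
    deriv (deriv Gamma) x = Gamma x * (digammaSeries x ^ 2 + hurwitzSeries 2 x) := by
  have h : deriv Gamma =ᶠ[𝓝 x] fun y ↦ Gamma y * digammaSeries y :=
    eventually_gt_nhds hx |>.mono fun _ hy ↦ (hasDerivAt_Gamma_of_pos hy).deriv
  rw [h.deriv_eq, (hasDerivAt_Gamma_mul hx (hasDerivAt_digammaSeries hx)).deriv]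
  ring

lemma deriv_deriv_deriv_Gamma {x : ℝ} (hx : 0 < x) :
    deriv (deriv (deriv Gamma)) x = Gamma x *
      (digammaSeries x ^ 3 + 3 * digammaSeries x * hurwitzSeries 2 x - 2 * hurwitzSeries 3 x) := by
  have h : deriv (deriv Gamma) =ᶠ[𝓝 x]
      fun y ↦ Gamma y * (digammaSeries y ^ 2 + hurwitzSeries 2 y) :=
    eventually_gt_nhds hx |>.mono fun _ hy ↦ deriv_deriv_Gamma hy
  have hf := ((hasDerivAt_digammaSeries hx).fun_pow 2).fun_add
    (hasDerivAt_hurwitzSeries one_lt_two hx)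
  rw [h.deriv_eq, (hasDerivAt_Gamma_mul hx hf).deriv]
  push_cast
  ring

lemma digammaSeries_one : digammaSeries 1 = -eulerMascheroniConstant := by
  simp [digammaSeries, add_comm]

lemma hurwitzSeries_one (s : ℕ) : hurwitzSeries s 1 = ∑' m : ℕ, 1 / ((m : ℝ) + 1) ^ s := by
  simp [hurwitzSeries, add_comm]

lemma hurwitzSeries_two_one : hurwitzSeries 2 1 = π ^ 2 / 6 := by
  have h := hasSum_zeta_two.summable.tsum_eq_zero_add
  rw [hasSum_zeta_two.tsum_eq] at h
  simpa [hurwitzSeries_one] using h.symm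

end Real

/-- `Γ'''(1) = −γ³ − 3·(π²/6)·γ − 2·ζ(3)`, where `ζ(3) = ∑_{m=1}^∞ m⁻³`. -/
theorem gamma_third_deriv_one :
    iteratedDeriv 3 Real.Gamma 1 =
      -Real.eulerMascheroniConstant ^ 3
        - 3 * (π ^ 2 / 6) * Real.eulerMascheroniConstant
        - 2 * ∑' m : ℕ, (1 : ℝ) / (m + 1) ^ 3 := by
  rw [iteratedDeriv_eq_iterate, Function.iterate_succ, Function.iterate_succ, Function.iterate_one,
    Function.comp_apply, Function.comp_apply, deriv_deriv_deriv_Gamma one_pos, Gamma_one,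
    digammaSeries_one, hurwitzSeries_two_one, hurwitzSeries_one]
  ring
end
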